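/- Let λ < λ̂ and m > 0 be a positive integer. Define R_i = Pr[m + Poisson(λ) = i] / Pr[Poisson(λ̂) = i] for i ≥ m. Then R_i / R_{i+1} = λ̂(i+1−m) / (λ(i+1)), and consequently R_i is increasing for i ≤ m/(1−λ/λ̂) − 1 and decreasing for larger i; hence the pmfs of m + Poisson(λ) and Poisson(λ̂) intersect at most twice. -/

import Mathlib

/-!
Both pmfs satisfy a first-order recurrence in `i`, so the ratio `R` does too:
`R (i + 1) * λ̂ (i + 1 - m) = R i * λ (i + 1)`. Hence `R` increases exactly while
`λ̂ (i + 1 - m) ≤ λ (i + 1)`, a condition linear in `i` that holds up to the threshold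
`m / (1 - λ / λ̂) - 1` and fails afterwards. A unimodal sequence lies above the minimum of
its values at the ends of any interval, so `{i | R i > 1}`, the set where the shifted pmf
exceeds the other one, is an interval.
-/

/-- The pmf of `m + Poisson(lam)`. -/
noncomputable def shiftedPoissonPMF (lam : ℝ) (m : ℕ) (i : ℕ) : ℝ :=
  if m ≤ i then Real.exp (-lam) * lam ^ (i - m) / (i - m).factorial else 0

/-- The likelihood ratio `R i = Pr[m + Poisson(λ) = i] / Pr[Poisson(λ̂) = i]`. -/
noncomputable def poissonRatio (lam lamh : ℝ) (m : ℕ) (i : ℕ) : ℝ :=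
  shiftedPoissonPMF lam m i / shiftedPoissonPMF lamh 0 i

lemma shiftedPoissonPMF_of_lt {lam : ℝ} {m i : ℕ} (h : i < m) : shiftedPoissonPMF lam m i = 0 :=
  if_neg h.not_ge

lemma shiftedPoissonPMF_pos {lam : ℝ} (hlam : 0 < lam) {m i : ℕ} (h : m ≤ i) :
    0 < shiftedPoissonPMF lam m i := by
  rw [shiftedPoissonPMF, if_pos h]
  positivity

lemma shiftedPoissonPMF_succ_mul (lam : ℝ) {m i : ℕ} (h : m ≤ i) :
    shiftedPoissonPMF lam m (i + 1) * ((i : ℝ) + 1 - m) = lam * shiftedPoissonPMF lam m i := by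
  rw [shiftedPoissonPMF, shiftedPoissonPMF, if_pos h, if_pos (h.trans i.le_succ),
    show i + 1 - m = i - m + 1 by omega, Nat.factorial_succ, pow_succ]
  have hcast : ((i - m + 1 : ℕ) : ℝ) = (i : ℝ) + 1 - m := by
    rw [Nat.cast_add_one, Nat.cast_sub h]; ring
  have hpos : ((i : ℝ) + 1 - m) ≠ 0 := by
    rw [← hcast]; positivity
  push_cast [hcast]
  field_simp

section Ratio

variable {lam lamh : ℝ} {m i : ℕ}

lemma poissonRatio_succ_mul (hlamh : 0 < lamh) (h : m ≤ i) :
    poissonRatio lam lamh m (i + 1) * (lamh * ((i : ℝ) + 1 - m)) =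
      poissonRatio lam lamh m i * (lam * ((i : ℝ) + 1)) := by
  have hp := shiftedPoissonPMF_succ_mul lam h
  have hq := shiftedPoissonPMF_succ_mul lamh (Nat.zero_le i)
  rw [Nat.cast_zero, sub_zero] at hq
  rw [poissonRatio, poissonRatio, div_mul_eq_mul_div, div_mul_eq_mul_div,
    div_eq_div_iff (shiftedPoissonPMF_pos hlamh i.succ.zero_le).ne'
      (shiftedPoissonPMF_pos hlamh i.zero_le).ne']
  linear_combination (lamh * shiftedPoissonPMF lamh 0 i) * hp -
    (lam * shiftedPoissonPMF lam m i) * hq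

lemma poissonRatio_pos (hlam : 0 < lam) (hlamh : 0 < lamh) (h : m ≤ i) :
    0 < poissonRatio lam lamh m i :=
  div_pos (shiftedPoissonPMF_pos hlam h) (shiftedPoissonPMF_pos hlamh i.zero_le)

lemma one_le_poissonRatio_iff (hlamh : 0 < lamh) :
    1 ≤ poissonRatio lam lamh m i ↔ shiftedPoissonPMF lamh 0 i ≤ shiftedPoissonPMF lam m i :=
  one_le_div (shiftedPoissonPMF_pos hlamh i.zero_le)

lemma one_lt_poissonRatio_iff (hlamh : 0 < lamh) :
    1 < poissonRatio lam lamh m i ↔ shiftedPoissonPMF lamh 0 i < shiftedPoissonPMF lam m i :=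
  one_lt_div (shiftedPoissonPMF_pos hlamh i.zero_le)

lemma poissonRatio_le_succ_iff (hlam : 0 < lam) (hlamh : 0 < lamh) (h : m ≤ i) :
    poissonRatio lam lamh m i ≤ poissonRatio lam lamh m (i + 1) ↔
      lamh * ((i : ℝ) + 1 - m) ≤ lam * ((i : ℝ) + 1) := by
  have hb : 0 < lam * ((i : ℝ) + 1) := by positivity
  rw [← mul_le_mul_iff_of_pos_right hb, ← poissonRatio_succ_mul hlamh h,
    mul_le_mul_iff_of_pos_left (poissonRatio_pos hlam hlamh (h.trans i.le_succ))]

lemma poissonRatio_succ_le_iff (hlam : 0 < lam) (hlamh : 0 < lamh) (h : m ≤ i) :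
    poissonRatio lam lamh m (i + 1) ≤ poissonRatio lam lamh m i ↔
      lam * ((i : ℝ) + 1) ≤ lamh * ((i : ℝ) + 1 - m) := by
  have hb : 0 < lam * ((i : ℝ) + 1) := by positivity
  rw [← mul_le_mul_iff_of_pos_right hb, ← poissonRatio_succ_mul hlamh h,
    mul_le_mul_iff_of_pos_left (poissonRatio_pos hlam hlamh (h.trans i.le_succ))]

end Ratio

section Threshold

variable {lam lamh m x : ℝ}

lemma one_sub_div_mul_eq (hlamh : lamh ≠ 0) (y : ℝ) :
    y * (1 - lam / lamh) * lamh = y * (lamh - lam) := by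
  field_simp

lemma le_div_one_sub_div_sub_one_iff (hlt : lam < lamh) (hlamh : 0 < lamh) :
    x ≤ m / (1 - lam / lamh) - 1 ↔ lamh * (x + 1 - m) ≤ lam * (x + 1) := by
  have hc : 0 < 1 - lam / lamh := sub_pos.2 ((div_lt_one hlamh).2 hlt)
  rw [le_sub_iff_add_le, le_div_iff₀ hc, ← mul_le_mul_iff_of_pos_right hlamh,
    one_sub_div_mul_eq hlamh.ne']
  constructor <;> intro h <;> linarith

lemma div_one_sub_div_sub_one_le_iff (hlt : lam < lamh) (hlamh : 0 < lamh) :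
    m / (1 - lam / lamh) - 1 ≤ x ↔ lam * (x + 1) ≤ lamh * (x + 1 - m) := by
  have hc : 0 < 1 - lam / lamh := sub_pos.2 ((div_lt_one hlamh).2 hlt)
  rw [sub_le_iff_le_add, div_le_iff₀ hc, ← mul_le_mul_iff_of_pos_right hlamh,
    one_sub_div_mul_eq hlamh.ne']
  constructor <;> intro h <;> linarith

end Threshold

lemma min_le_of_le_succ_of_succ_le {β : Type*} [LinearOrder β] {f : ℕ → β} {m : ℕ}
    {t : ℝ} (hup : ∀ i, m ≤ i → (i : ℝ) ≤ t → f i ≤ f (i + 1))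
    (hdown : ∀ i, m ≤ i → t ≤ i → f (i + 1) ≤ f i)
    {i j k : ℕ} (hmi : m ≤ i) (hij : i ≤ j) (hjk : j ≤ k) : min (f i) (f k) ≤ f j := by
  have hmono : MonotoneOn f {n | m ≤ n ∧ (n : ℝ) ≤ t + 1} := by
    refine monotoneOn_of_le_succ ⟨fun a ha b hb n hn ↦
      ⟨ha.1.trans hn.1, (Nat.cast_le.2 hn.2).trans hb.2⟩⟩ fun n _ hn hn' ↦ hup n hn.1 ?_
    simpa using hn'.2
  have hanti : AntitoneOn f {n | m ≤ n ∧ t ≤ n} :=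
    antitoneOn_of_succ_le ⟨fun a ha _ _ n hn ↦
      ⟨ha.1.trans hn.1, ha.2.trans (Nat.cast_le.2 hn.1)⟩⟩ fun n _ hn _ ↦ hdown n hn.1 hn.2
  rcases le_or_gt (j : ℝ) (t + 1) with hj | hj
  · exact min_le_of_left_le
      (hmono ⟨hmi, (Nat.cast_le.2 hij).trans hj⟩ ⟨hmi.trans hij, hj⟩ hij)
  · have hmj := hmi.trans hij
    have hjk' : (j : ℝ) ≤ k := Nat.cast_le.2 hjk
    exact min_le_of_right_le (hanti ⟨hmj, by linarith⟩ ⟨hmj.trans hjk, by linarith⟩ hjk)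

theorem stmt6_general (lam lamh : ℝ) (hlam : 0 < lam) (hlt : lam < lamh) (m : ℕ) :
    (∀ i : ℕ, m ≤ i →
      poissonRatio lam lamh m i / poissonRatio lam lamh m (i + 1) =
        lamh * ((i : ℝ) + 1 - m) / (lam * ((i : ℝ) + 1))) ∧
    (∀ i : ℕ, m ≤ i →
      (((i : ℝ) ≤ (m : ℝ) / (1 - lam / lamh) - 1 →
          poissonRatio lam lamh m i ≤ poissonRatio lam lamh m (i + 1)) ∧
       ((m : ℝ) / (1 - lam / lamh) - 1 ≤ (i : ℝ) →
          poissonRatio lam lamh m (i + 1) ≤ poissonRatio lam lamh m i))) ∧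
    (∀ i j k : ℕ, i ≤ j → j ≤ k →
      shiftedPoissonPMF lamh 0 i < shiftedPoissonPMF lam m i →
      shiftedPoissonPMF lamh 0 k < shiftedPoissonPMF lam m k →
      shiftedPoissonPMF lamh 0 j ≤ shiftedPoissonPMF lam m j) := by
  have hlamh : 0 < lamh := hlam.trans hlt
  have hmono : ∀ i : ℕ, m ≤ i →
      (((i : ℝ) ≤ (m : ℝ) / (1 - lam / lamh) - 1 →
          poissonRatio lam lamh m i ≤ poissonRatio lam lamh m (i + 1)) ∧
       ((m : ℝ) / (1 - lam / lamh) - 1 ≤ (i : ℝ) →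
          poissonRatio lam lamh m (i + 1) ≤ poissonRatio lam lamh m i)) := fun i hi ↦
    ⟨fun h ↦ (poissonRatio_le_succ_iff hlam hlamh hi).2
        ((le_div_one_sub_div_sub_one_iff hlt hlamh).1 h),
      fun h ↦ (poissonRatio_succ_le_iff hlam hlamh hi).2
        ((div_one_sub_div_sub_one_le_iff hlt hlamh).1 h)⟩
  refine ⟨fun i hi ↦ ?_, hmono, fun i j k hij hjk hi hk ↦ ?_⟩
  · rw [div_eq_div_iff (poissonRatio_pos hlam hlamh (hi.trans i.le_succ)).ne' (by positivity)]
    linear_combination (poissonRatio_succ_mul hlamh hi).symm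
  · have hmi : m ≤ i := by
      by_contra h
      rw [shiftedPoissonPMF_of_lt (not_le.1 h)] at hi
      exact lt_asymm hi (shiftedPoissonPMF_pos hlamh i.zero_le)
    rw [← one_le_poissonRatio_iff hlamh]
    calc 1 ≤ min (poissonRatio lam lamh m i) (poissonRatio lam lamh m k) :=
          (lt_min ((one_lt_poissonRatio_iff hlamh).2 hi)
            ((one_lt_poissonRatio_iff hlamh).2 hk)).le
      _ ≤ poissonRatio lam lamh m j :=
          min_le_of_le_succ_of_succ_le (fun n hn ↦ (hmono n hn).1)
            (fun n hn ↦ (hmono n hn).2) hmi hij hjk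

/-- For `λ < λ̂` and `m > 0`: the ratio `R_i / R_{i+1}` equals `λ̂(i+1−m)/(λ(i+1))` for
`i ≥ m`; consequently `R` is increasing for `i ≤ m/(1−λ/λ̂) − 1` and decreasing for larger
`i`, and the pmfs of `m + Poisson(λ)` and `Poisson(λ̂)` intersect at most twice (the set
where the first pmf exceeds the second is an interval). -/
theorem stmt6 (lam lamh : ℝ) (hlam : 0 < lam) (hlt : lam < lamh) (m : ℕ) (hm : 0 < m) :
    (∀ i : ℕ, m ≤ i →
      poissonRatio lam lamh m i / poissonRatio lam lamh m (i + 1) =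
        lamh * ((i : ℝ) + 1 - m) / (lam * ((i : ℝ) + 1))) ∧
    (∀ i : ℕ, m ≤ i →
      (((i : ℝ) ≤ (m : ℝ) / (1 - lam / lamh) - 1 →
          poissonRatio lam lamh m i ≤ poissonRatio lam lamh m (i + 1)) ∧
       ((m : ℝ) / (1 - lam / lamh) - 1 ≤ (i : ℝ) →
          poissonRatio lam lamh m (i + 1) ≤ poissonRatio lam lamh m i))) ∧
    (∀ i j k : ℕ, i ≤ j → j ≤ k →
      shiftedPoissonPMF lamh 0 i < shiftedPoissonPMF lam m i →
      shiftedPoissonPMF lamh 0 k < shiftedPoissonPMF lam m k →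
      shiftedPoissonPMF lamh 0 j ≤ shiftedPoissonPMF lam m j) :=
  stmt6_general lam lamh hlam hlt m
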